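/- For every real number x, ∫_ℂ e^{-π|ξ|²/2}·(π|ξ|² - 2)·||ξ|² - x²| dA(ξ) = -8/π + e^{-πx²/2}·(8x² + 16/π). -/

import Mathlib

/-!
In polar coordinates the integral is `2π ∫₀^∞ r e^{-πr²/2} (πr² - 2) |r² - x²| dr`. The function
`H(r) = e^{-πr²/2} (r⁴ - x²r² + 2r²/π + 4/π²)` is a primitive of `r e^{-πr²/2} (πr² - 2) (x² - r²)`
that vanishes at infinity, so splitting the radial integral at `r = |x|` gives `2 H(|x|) - H(0)`.
-/

open MeasureTheory Real Set Filter Topology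

theorem Complex.integral_fun_norm {F : Type*} [NormedAddCommGroup F] [NormedSpace ℝ F]
    (f : ℝ → F) : ∫ ξ : ℂ, f ‖ξ‖ = (2 * π) • ∫ r in Ioi (0 : ℝ), r • f r := by
  rw [integral_fun_norm_addHaar volume f]
  simp [measureReal_def, smul_smul, ← Nat.cast_smul_eq_nsmul ℝ]

theorem integrable_pow_mul_exp_neg_mul_sq {b : ℝ} (hb : 0 < b) (n : ℕ) :
    Integrable fun r : ℝ => r ^ n * exp (-b * r ^ 2) := by
  simpa [rpow_natCast] using
    integrable_rpow_mul_exp_neg_mul_sq hb (s := n) (neg_one_lt_zero.trans_le n.cast_nonneg)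

theorem tendsto_pow_mul_exp_neg_mul_sq_atTop {b : ℝ} (hb : 0 < b) (n : ℕ) :
    Tendsto (fun r : ℝ => r ^ n * exp (-b * r ^ 2)) atTop (𝓝 0) := by
  refine ((tendsto_rpow_abs_mul_exp_neg_mul_sq_cocompact hb n).mono_left
    atTop_le_cocompact).congr' ?_
  filter_upwards [eventually_ge_atTop 0] with r hr
  rw [abs_of_nonneg hr, rpow_natCast]

noncomputable def radialIntegrand (x r : ℝ) : ℝ :=
  r * (exp (-(π / 2) * r ^ 2) * (π * r ^ 2 - 2) * |r ^ 2 - x ^ 2|)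

noncomputable def radialPrimitive (x r : ℝ) : ℝ :=
  exp (-(π / 2) * r ^ 2) * (r ^ 4 - x ^ 2 * r ^ 2 + 2 / π * r ^ 2 + 4 / π ^ 2)

theorem hasDerivAt_radialPrimitive (x r : ℝ) :
    HasDerivAt (radialPrimitive x)
      (r * (exp (-(π / 2) * r ^ 2) * (π * r ^ 2 - 2) * (x ^ 2 - r ^ 2))) r := by
  have hexp : HasDerivAt (fun r : ℝ => exp (-(π / 2) * r ^ 2))
      (exp (-(π / 2) * r ^ 2) * (-(π / 2) * (2 * r))) r := by
    simpa using ((hasDerivAt_pow 2 r).const_mul (-(π / 2))).exp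
  have hpoly : HasDerivAt (fun r : ℝ => r ^ 4 - x ^ 2 * r ^ 2 + 2 / π * r ^ 2 + 4 / π ^ 2)
      (4 * r ^ 3 - x ^ 2 * (2 * r) + 2 / π * (2 * r)) r := by
    have hsq := hasDerivAt_pow 2 r
    simpa using
      (((hasDerivAt_pow 4 r).sub (hsq.const_mul (x ^ 2))).add (hsq.const_mul (2 / π))).add_const
        (4 / π ^ 2)
  refine (hexp.mul hpoly).congr_deriv ?_
  field_simp
  ring

theorem tendsto_radialPrimitive_atTop (x : ℝ) : Tendsto (radialPrimitive x) atTop (𝓝 0) := by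
  have hT := tendsto_pow_mul_exp_neg_mul_sq_atTop (b := π / 2) (by positivity)
  have hsum := ((hT 4).add ((hT 2).const_mul (2 / π - x ^ 2))).add ((hT 0).const_mul (4 / π ^ 2))
  simp only [mul_zero, add_zero] at hsum
  exact hsum.congr fun r => by unfold radialPrimitive; ring

theorem integrable_deriv_radialPrimitive (x : ℝ) :
    Integrable fun r : ℝ => r * (exp (-(π / 2) * r ^ 2) * (π * r ^ 2 - 2) * (x ^ 2 - r ^ 2)) := by
  have hI := integrable_pow_mul_exp_neg_mul_sq (b := π / 2) (by positivity)
  refine ((((hI 5).const_mul (-π)).add ((hI 3).const_mul (π * x ^ 2 + 2))).add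
    ((hI 1).const_mul (-(2 * x ^ 2)))).congr (ae_of_all _ fun r => ?_)
  simp only [Pi.add_apply]
  ring

theorem integrable_radialIntegrand (x : ℝ) : Integrable (radialIntegrand x) := by
  refine (integrable_deriv_radialPrimitive x).mono (by unfold radialIntegrand; fun_prop)
    (ae_of_all _ fun r => ?_)
  simp only [radialIntegrand, norm_mul, norm_abs_eq_norm, abs_sub_comm, le_refl]

theorem integral_Ioc_radialIntegrand (x : ℝ) :
    ∫ r in Ioc 0 |x|, radialIntegrand x r = radialPrimitive x |x| - radialPrimitive x 0 := by
  rw [← intervalIntegral.integral_of_le (abs_nonneg x),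
    ← intervalIntegral.integral_eq_sub_of_hasDerivAt (fun r _ => hasDerivAt_radialPrimitive x r)
      (integrable_deriv_radialPrimitive x).intervalIntegrable]
  refine intervalIntegral.integral_congr fun r hr => ?_
  rw [uIcc_of_le (abs_nonneg x)] at hr
  have hrx : r ^ 2 ≤ x ^ 2 := by rw [← sq_abs x]; exact pow_le_pow_left₀ hr.1 hr.2 2
  simp only [radialIntegrand, abs_of_nonpos (sub_nonpos.2 hrx), neg_sub]

theorem integral_Ioi_radialIntegrand (x : ℝ) :
    ∫ r in Ioi |x|, radialIntegrand x r = radialPrimitive x |x| := by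
  have hftc := integral_Ioi_of_hasDerivAt_of_tendsto' (a := |x|)
    (fun r _ => (hasDerivAt_radialPrimitive x r).neg)
    (integrable_deriv_radialPrimitive x).neg.integrableOn (tendsto_radialPrimitive_atTop x).neg
  simp only [neg_zero, zero_sub, Pi.neg_apply, neg_neg] at hftc
  rw [← hftc]
  refine setIntegral_congr_fun measurableSet_Ioi fun r hr => ?_
  have hxr : x ^ 2 ≤ r ^ 2 := by
    rw [← sq_abs x]; exact pow_le_pow_left₀ (abs_nonneg x) (le_of_lt hr) 2
  simp only [radialIntegrand, abs_of_nonneg (sub_nonneg.2 hxr)]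
  ring

theorem integral_Ioi_zero_radialIntegrand (x : ℝ) :
    ∫ r in Ioi 0, radialIntegrand x r =
      exp (-(π / 2) * x ^ 2) * (4 / π * x ^ 2 + 8 / π ^ 2) - 4 / π ^ 2 := by
  have hint := integrable_radialIntegrand x
  rw [← Ioc_union_Ioi_eq_Ioi (abs_nonneg x), setIntegral_union (Ioc_disjoint_Ioi le_rfl)
    measurableSet_Ioi hint.integrableOn hint.integrableOn, integral_Ioc_radialIntegrand,
    integral_Ioi_radialIntegrand]
  have hzero : radialPrimitive x 0 = 4 / π ^ 2 := by simp [radialPrimitive]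
  rw [hzero]
  simp only [radialPrimitive, sq_abs, show |x| ^ 4 = (x ^ 2) ^ 2 by rw [← sq_abs x]; ring]
  ring

theorem second_order_integral_eval (x : ℝ) :
    ∫ ξ : ℂ, Real.exp (-π * ‖ξ‖ ^ 2 / 2) * (π * ‖ξ‖ ^ 2 - 2) *
        |‖ξ‖ ^ 2 - x ^ 2| =
      -8 / π + Real.exp (-π * x ^ 2 / 2) * (8 * x ^ 2 + 16 / π) := by
  have hexp (r : ℝ) : -π * r ^ 2 / 2 = -(π / 2) * r ^ 2 := by ring
  simp_rw [hexp]
  rw [Complex.integral_fun_norm fun r => exp (-(π / 2) * r ^ 2) * (π * r ^ 2 - 2) * |r ^ 2 - x ^ 2|]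
  change (2 * π) • ∫ r in Ioi (0 : ℝ), radialIntegrand x r = _
  rw [smul_eq_mul, integral_Ioi_zero_radialIntegrand]
  field_simp
  ring
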